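/- arXiv:1204.4365 — 5 statements merged into one kernel-verified Lean document; each statement's English description precedes it below -/
import Mathlib

section
/- Let A be an LM_θ-algebra and (X(A),{f_i^A}_{i∈I}) its dual l_θP-space of prime filters. Then the map Θ_OS defined by Θ_OS(G) = {(a,b) ∈ A×A : σ_A(a) △ σ_A(b) ⊆ G} is a lattice isomorphism from the lattice (ordered by inclusion) of all open subsets G of X(A) whose complement X(A)\G is semimodal onto the lattice of all LM_θ-congruences on A. -/
/-- An LM_θ-algebra over a linearly ordered index set `I`:
a bounded distributive lattice with operations `phi i` and `phibar i`. -/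
structure LMAlg (I A : Type*) [LinearOrder I] [DistribLattice A] [BoundedOrder A] where
  phi : I → A → A
  phibar : I → A → A
  phi_sup : ∀ i x y, phi i (x ⊔ y) = phi i x ⊔ phi i y
  phi_inf : ∀ i x y, phi i (x ⊓ y) = phi i x ⊓ phi i y
  phi_bot : ∀ i, phi i ⊥ = ⊥
  phi_top : ∀ i, phi i ⊤ = ⊤
  sup_phibar : ∀ i x, phi i x ⊔ phibar i x = ⊤
  inf_phibar : ∀ i x, phi i x ⊓ phibar i x = ⊥
  phi_phi : ∀ i j x, phi i (phi j x) = phi j x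
  phi_mono : ∀ ⦃i j : I⦄, i ≤ j → ∀ x, phi i x ≤ phi j x
  determined : ∀ x y, (∀ i, phi i x = phi i y) → x = y

/-- A prime filter of a bounded distributive lattice. -/
structure PrimeFilter (A : Type*) [DistribLattice A] [BoundedOrder A] where
  carrier : Set A
  top_mem : ⊤ ∈ carrier
  bot_notMem : ⊥ ∉ carrier
  mem_of_le : ∀ {a b : A}, a ∈ carrier → a ≤ b → b ∈ carrier
  inf_mem : ∀ {a b : A}, a ∈ carrier → b ∈ carrier → a ⊓ b ∈ carrier
  prime : ∀ {a b : A}, a ⊔ b ∈ carrier → a ∈ carrier ∨ b ∈ carrier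

variable {I A : Type*} [LinearOrder I] [DistribLattice A] [BoundedOrder A]

/-- Prime filters ordered by inclusion. -/
instance : PartialOrder (PrimeFilter A) where
  le P Q := P.carrier ⊆ Q.carrier
  le_refl _ _ hx := hx
  le_trans _ _ _ h1 h2 _ hx := h2 (h1 hx)
  le_antisymm P Q h1 h2 := by
    cases P; cases Q
    simp only [PrimeFilter.mk.injEq]
    exact subset_antisymm h1 h2

/-- The map `σ_A`. -/
def sigmaA (a : A) : Set (PrimeFilter A) := {P | a ∈ P.carrier}

/-- The Priestley topology on the set of prime filters, with sub-basis the sets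
`σ_A a` and their complements. -/
instance : TopologicalSpace (PrimeFilter A) :=
  TopologicalSpace.generateFrom
    (Set.range (sigmaA (A := A)) ∪ Set.range (fun a : A => (sigmaA a)ᶜ))

/-- The map `f_i^A (P) = φ_i⁻¹(P)` on prime filters. -/
def LMAlg.fA (L : LMAlg I A) (i : I) (P : PrimeFilter A) : PrimeFilter A where
  carrier := L.phi i ⁻¹' P.carrier
  top_mem := by simp only [Set.mem_preimage, L.phi_top]; exact P.top_mem
  bot_notMem := by simp only [Set.mem_preimage, L.phi_bot]; exact P.bot_notMem
  mem_of_le := by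
    intro a b ha hab
    have h1 : L.phi i b = L.phi i a ⊔ L.phi i b := by
      rw [← L.phi_sup, sup_eq_right.mpr hab]
    exact P.mem_of_le ha (le_sup_left.trans_eq h1.symm)
  inf_mem := by
    intro a b ha hb
    simp only [Set.mem_preimage, L.phi_inf]
    exact P.inf_mem ha hb
  prime := by
    intro a b h
    simp only [Set.mem_preimage, L.phi_sup] at h
    exact P.prime h

/-- An LM_θ-congruence: a bounded-lattice congruence compatible with all `phi i`, `phibar i`. -/
structure IsLMCongr (L : LMAlg I A) (r : A → A → Prop) : Prop where
  refl : ∀ x, r x x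
  symm : ∀ {x y}, r x y → r y x
  trans : ∀ {x y z}, r x y → r y z → r x z
  sup_congr : ∀ {x y u v}, r x y → r u v → r (x ⊔ u) (y ⊔ v)
  inf_congr : ∀ {x y u v}, r x y → r u v → r (x ⊓ u) (y ⊓ v)
  phi_congr : ∀ (i : I) {x y}, r x y → r (L.phi i x) (L.phi i y)
  phibar_congr : ∀ (i : I) {x y}, r x y → r (L.phibar i x) (L.phibar i y)

/-- A θ-congruence: a lattice congruence `r` with `r x y ↔ ∀ i, r (φ_i x) (φ_i y)`. -/
structure IsThetaCongr (L : LMAlg I A) (r : A → A → Prop) : Prop where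
  refl : ∀ x, r x x
  symm : ∀ {x y}, r x y → r y x
  trans : ∀ {x y z}, r x y → r y z → r x z
  sup_congr : ∀ {x y u v}, r x y → r u v → r (x ⊔ u) (y ⊔ v)
  inf_congr : ∀ {x y u v}, r x y → r u v → r (x ⊓ u) (y ⊓ v)
  theta : ∀ x y, r x y ↔ ∀ i : I, r (L.phi i x) (L.phi i y)

/-- `Y` is semimodal if `f i '' Y ⊆ Y` for all `i`. -/
def Semimodal {I X : Type*} (f : I → X → X) (Y : Set X) : Prop := ∀ i, f i '' Y ⊆ Y

/-- `Y` is modal if `f i ⁻¹' Y = Y` for all `i`. -/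
def Modal {I X : Type*} (f : I → X → X) (Y : Set X) : Prop := ∀ i, f i ⁻¹' Y = Y

/-- `Y` is a θ-subset if `⋃ i, f i '' Y ⊆ Y ⊆ closure (⋃ i, f i '' Y)`. -/
def ThetaSubset {I X : Type*} [TopologicalSpace X] (f : I → X → X) (Y : Set X) : Prop :=
  (⋃ i, f i '' Y) ⊆ Y ∧ Y ⊆ closure (⋃ i, f i '' Y)

/-- The relation `Θ` determined by an (open) subset `G` of the dual space:
`(a,b) ∈ Θ(G)` iff `σ_A a △ σ_A b ⊆ G`. -/
def thetaO (G : Set (PrimeFilter A)) : A → A → Prop :=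
  fun a b => symmDiff (sigmaA a) (sigmaA b) ⊆ G

/-- `r` is the principal LM_θ-congruence generated by `(a,b)`. -/
def IsPrincipalLMCongrOn (L : LMAlg I A) (r : A → A → Prop) (a b : A) : Prop :=
  IsLMCongr L r ∧ r a b ∧ ∀ s, IsLMCongr L s → s a b → ∀ x y, r x y → s x y

/-- `r` is the principal θ-congruence generated by `(a,b)`. -/
def IsPrincipalThetaCongrOn (L : LMAlg I A) (r : A → A → Prop) (a b : A) : Prop :=
  IsThetaCongr L r ∧ r a b ∧ ∀ s, IsThetaCongr L s → s a b → ∀ x y, r x y → s x y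

/-- `r` is a principal LM_θ-congruence. -/
def IsPrincipalLMCongr (L : LMAlg I A) (r : A → A → Prop) : Prop :=
  ∃ a b, IsPrincipalLMCongrOn L r a b

/-- `r` is a principal θ-congruence. -/
def IsPrincipalThetaCongr (L : LMAlg I A) (r : A → A → Prop) : Prop :=
  ∃ a b, IsPrincipalThetaCongrOn L r a b

/-- `r` is a Boolean LM_θ-congruence: a complemented element of the lattice of
LM_θ-congruences ordered by inclusion (the bottom element is equality and the
join of `r` and its complement, i.e. the least congruence containing both, is
the total relation). -/
def IsBooleanLMCongr (L : LMAlg I A) (r : A → A → Prop) : Prop :=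
  IsLMCongr L r ∧ ∃ s, IsLMCongr L s ∧
    (∀ x y, (r x y ∧ s x y) ↔ x = y) ∧
    (∀ t, IsLMCongr L t → (∀ x y, r x y → t x y) → (∀ x y, s x y → t x y) → ∀ x y, t x y)


/-!
The inverse of `Θ_OS` sends a congruence `r` to the union of the sets `σ a ∆ σ b` over the
pairs with `r a b`. This union recovers an open `G` because the sets `σ c \ σ d` form a basis of
the Priestley topology. It recovers a lattice congruence `r` by the prime filter theorem in the
quotient lattice `A ⧸ r`: if `¬ r a b`, a prime filter of `A ⧸ r` separating the classes of `a`
and `b` pulls back to a point of `σ a ∆ σ b` lying in no `σ c ∆ σ d` with `r c d`.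
Semimodality of `Gᶜ` is what makes `Θ(G)` compatible with each `φ i`; compatibility with
`φ̄ i` follows because `σ (φ̄ i a)` is the complement of `σ (φ i a)`.
-/

open scoped symmDiff

namespace LatticeCon

variable {α : Type*} [DistribLattice α] (c : LatticeCon α)

-- Not an `abbrev`: `Quotient` already carries an unrelated `Preorder` instance.
protected def Quotient := Quotient c.toSetoid

instance : Max c.Quotient := ⟨Quotient.map₂ (· ⊔ ·) fun _ _ h _ _ h' => c.sup h h'⟩
instance : Min c.Quotient := ⟨Quotient.map₂ (· ⊓ ·) fun _ _ h _ _ h' => c.inf h h'⟩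

instance : Lattice c.Quotient :=
  Lattice.mk'
    (by rintro ⟨a⟩ ⟨b⟩; exact congrArg (Quotient.mk _) (sup_comm a b))
    (by rintro ⟨a⟩ ⟨b⟩ ⟨d⟩; exact congrArg (Quotient.mk _) (sup_assoc a b d))
    (by rintro ⟨a⟩ ⟨b⟩; exact congrArg (Quotient.mk _) (inf_comm a b))
    (by rintro ⟨a⟩ ⟨b⟩ ⟨d⟩; exact congrArg (Quotient.mk _) (inf_assoc a b d))
    (by rintro ⟨a⟩ ⟨b⟩; exact congrArg (Quotient.mk _) (sup_inf_self : a ⊔ a ⊓ b = a))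
    (by rintro ⟨a⟩ ⟨b⟩; exact congrArg (Quotient.mk _) (inf_sup_self : a ⊓ (a ⊔ b) = a))

instance : DistribLattice c.Quotient :=
  .ofInfSupLe <| by
    rintro ⟨a⟩ ⟨b⟩ ⟨d⟩
    exact le_of_eq (congrArg (Quotient.mk c.toSetoid) (inf_sup_left a b d))

instance [BoundedOrder α] : BoundedOrder c.Quotient where
  top := Quotient.mk _ ⊤
  le_top := by
    rintro ⟨a⟩; exact sup_eq_right.mp (congrArg (Quotient.mk c.toSetoid) (sup_top_eq a))
  bot := Quotient.mk _ ⊥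
  bot_le := by
    rintro ⟨a⟩; exact sup_eq_right.mp (congrArg (Quotient.mk c.toSetoid) (bot_sup_eq a))

def mkHom [BoundedOrder α] : BoundedLatticeHom α c.Quotient where
  toFun := Quotient.mk _
  map_sup' _ _ := rfl
  map_inf' _ _ := rfl
  map_top' := rfl
  map_bot' := rfl

theorem mkHom_eq_mkHom [BoundedOrder α] {a b : α} : c.mkHom a = c.mkHom b ↔ c.r a b :=
  Quotient.eq

end LatticeCon

namespace PrimeFilter

variable {B : Type*} [DistribLattice B] [BoundedOrder B]

def ofIsPrime (J : Order.Ideal A) [hJ : J.IsPrime] : PrimeFilter A where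
  carrier := (J : Set A)ᶜ
  top_mem := hJ.top_notMem
  bot_notMem h := h J.bot_mem
  mem_of_le ha hab hb := ha (J.lower hab hb)
  inf_mem ha hb h := (hJ.mem_or_mem h).elim ha hb
  prime h := by
    by_contra! hab
    exact h (J.sup_mem (not_not.mp hab.1) (not_not.mp hab.2))

theorem exists_mem_notMem_of_not_le {a b : A} (h : ¬a ≤ b) :
    ∃ P : PrimeFilter A, a ∈ P.carrier ∧ b ∉ P.carrier := by
  have hdisj : Disjoint (Order.PFilter.principal a : Set A) (Order.Ideal.principal b) :=
    Set.disjoint_left.mpr fun x hax hxb => h (le_trans hax hxb)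
  obtain ⟨J, hJ, hbJ, hJa⟩ := DistribLattice.prime_ideal_of_disjoint_filter_ideal hdisj
  exact ⟨ofIsPrime J, Set.disjoint_left.mp hJa (le_refl a),
    not_not.mpr (hbJ Order.Ideal.mem_principal_self)⟩

def comap (f : BoundedLatticeHom A B) (P : PrimeFilter B) : PrimeFilter A where
  carrier := f ⁻¹' P.carrier
  top_mem := by simpa using P.top_mem
  bot_notMem := by simpa using P.bot_notMem
  mem_of_le ha hab := P.mem_of_le ha (OrderHomClass.mono f hab)
  inf_mem ha hb := by simpa using P.inf_mem ha hb
  prime h := P.prime (by simpa using h)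

end PrimeFilter

theorem Set.inter_symmDiff_inter_subset {α : Type*} (s t s' t' : Set α) :
    (s ∩ t) ∆ (s' ∩ t') ⊆ s ∆ s' ∪ t ∆ t' := fun x => by
  simp only [Set.mem_symmDiff, Set.mem_union, Set.mem_inter_iff]; tauto

theorem sigmaA_sup (a b : A) : sigmaA (a ⊔ b) = sigmaA a ∪ sigmaA b :=
  Set.ext fun P =>
    ⟨P.prime, fun h => h.elim (P.mem_of_le · le_sup_left) (P.mem_of_le · le_sup_right)⟩

theorem sigmaA_inf (a b : A) : sigmaA (a ⊓ b) = sigmaA a ∩ sigmaA b :=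
  Set.ext fun P => ⟨fun h => ⟨P.mem_of_le h inf_le_left, P.mem_of_le h inf_le_right⟩,
    fun h => P.inf_mem h.1 h.2⟩

theorem sigmaA_top : sigmaA (⊤ : A) = Set.univ := Set.eq_univ_of_forall PrimeFilter.top_mem

theorem sigmaA_bot : sigmaA (⊥ : A) = ∅ := Set.eq_empty_of_forall_notMem PrimeFilter.bot_notMem

theorem symmDiff_sigmaA_inf (a b : A) : sigmaA a ∆ sigmaA (a ⊓ b) = sigmaA a \ sigmaA b := by
  rw [sigmaA_inf, symmDiff_of_ge Set.inter_subset_left, Set.sdiff_self_inter]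

theorem isOpen_sigmaA (a : A) : IsOpen (sigmaA a) :=
  .basic _ (.inl ⟨a, rfl⟩)

theorem isClosed_sigmaA (a : A) : IsClosed (sigmaA a) :=
  ⟨.basic _ (.inr ⟨a, rfl⟩)⟩

theorem isOpen_symmDiff_sigmaA (a b : A) : IsOpen (sigmaA a ∆ sigmaA b) :=
  ((isOpen_sigmaA a).sdiff (isClosed_sigmaA b)).union
    ((isOpen_sigmaA b).sdiff (isClosed_sigmaA a))

theorem exists_mem_sigmaA_diff_subset {G : Set (PrimeFilter A)} (hG : IsOpen G)
    {P : PrimeFilter A} (hP : P ∈ G) :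
    ∃ c d : A, P ∈ sigmaA c \ sigmaA d ∧ sigmaA c \ sigmaA d ⊆ G := by
  induction hG generalizing P with
  | basic s hs =>
    rcases hs with ⟨a, rfl⟩ | ⟨a, rfl⟩
    · exact ⟨a, ⊥, by simpa [sigmaA_bot] using hP, Set.sdiff_subset⟩
    · refine ⟨⊤, a, by simpa [sigmaA_top] using hP, ?_⟩
      simp [sigmaA_top, Set.compl_eq_univ_sdiff]
  | univ => exact ⟨⊤, ⊥, by simp [sigmaA_top, sigmaA_bot], Set.subset_univ _⟩
  | inter s t _ _ ihs iht =>
    obtain ⟨c, d, hPcd, hcd⟩ := ihs hP.1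
    obtain ⟨c', d', hPcd', hcd'⟩ := iht hP.2
    have key : sigmaA (c ⊓ c') \ sigmaA (d ⊔ d') =
        (sigmaA c \ sigmaA d) ∩ (sigmaA c' \ sigmaA d') := by
      ext Q
      simp only [sigmaA_inf, sigmaA_sup, Set.mem_sdiff, Set.mem_inter_iff, Set.mem_union]
      tauto
    refine ⟨c ⊓ c', d ⊔ d', ?_, ?_⟩ <;> rw [key]
    exacts [⟨hPcd, hPcd'⟩, Set.inter_subset_inter hcd hcd']
  | sUnion S _ ih =>
    obtain ⟨s, hsS, hPs⟩ := hP
    obtain ⟨c, d, hPcd, hcd⟩ := ih s hsS hPs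
    exact ⟨c, d, hPcd, hcd.trans (Set.subset_sUnion_of_mem hsS)⟩

theorem PrimeFilter.exists_mem_symmDiff_sigmaA_of_ne {a b : A} (h : a ≠ b) :
    ∃ P : PrimeFilter A, P ∈ sigmaA a ∆ sigmaA b := by
  by_cases hab : a ≤ b
  · obtain ⟨P, hb, ha⟩ := exists_mem_notMem_of_not_le fun hba => h (le_antisymm hab hba)
    exact ⟨P, Or.inr ⟨hb, ha⟩⟩
  · obtain ⟨P, ha, hb⟩ := exists_mem_notMem_of_not_le hab
    exact ⟨P, Or.inl ⟨ha, hb⟩⟩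

theorem sigmaA_eq_compl_of_isCompl {a b : A} (h : IsCompl a b) : sigmaA b = (sigmaA a)ᶜ := by
  refine (IsCompl.compl_eq ⟨?_, ?_⟩).symm
  · rw [Set.disjoint_iff_inter_eq_empty, ← sigmaA_inf, h.inf_eq_bot, sigmaA_bot]
  · exact codisjoint_iff.mpr
      ((sigmaA_sup a b).symm.trans (by rw [h.sup_eq_top, sigmaA_top]; rfl))

def thetaOLatticeCon (G : Set (PrimeFilter A)) : LatticeCon A where
  r := thetaO G
  iseqv :=
    { refl a := by simp [thetaO]
      symm h := by rwa [thetaO, symmDiff_comm]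
      trans h h' := (symmDiff_triangle _ _ _).trans (Set.union_subset h h') }
  inf h h' := by
    simp only [thetaO, sigmaA_inf]
    exact (Set.inter_symmDiff_inter_subset ..).trans (Set.union_subset h h')
  sup h h' := by
    simp only [thetaO, sigmaA_sup]
    exact (Set.union_symmDiff_union_subset ..).trans (Set.union_subset h h')

def unionSymmDiff (r : A → A → Prop) : Set (PrimeFilter A) :=
  ⋃ (a) (b) (_ : r a b), sigmaA a ∆ sigmaA b

theorem mem_unionSymmDiff {r : A → A → Prop} {P : PrimeFilter A} :
    P ∈ unionSymmDiff r ↔ ∃ a b, r a b ∧ P ∈ sigmaA a ∆ sigmaA b := by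
  simp only [unionSymmDiff, Set.mem_iUnion, exists_prop]

theorem symmDiff_subset_unionSymmDiff {r : A → A → Prop} {a b : A} (h : r a b) :
    sigmaA a ∆ sigmaA b ⊆ unionSymmDiff r :=
  fun _ hP => mem_unionSymmDiff.mpr ⟨a, b, h, hP⟩

theorem isOpen_unionSymmDiff (r : A → A → Prop) : IsOpen (unionSymmDiff r) :=
  isOpen_iUnion fun a => isOpen_iUnion fun b => isOpen_iUnion fun _ => isOpen_symmDiff_sigmaA a b

theorem unionSymmDiff_mono {r s : A → A → Prop} (h : r ≤ s) :
    unionSymmDiff r ⊆ unionSymmDiff s := fun _ hP => by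
    obtain ⟨a, b, hab, hP⟩ := mem_unionSymmDiff.mp hP
    exact symmDiff_subset_unionSymmDiff (h a b hab) hP

theorem unionSymmDiff_thetaO {G : Set (PrimeFilter A)} (hG : IsOpen G) :
    unionSymmDiff (thetaO G) = G := by
  refine subset_antisymm (Set.iUnion₂_subset fun a b => Set.iUnion_subset id) fun P hP => ?_
  obtain ⟨c, d, hP, hcd⟩ := exists_mem_sigmaA_diff_subset hG hP
  rw [← symmDiff_sigmaA_inf] at hP hcd
  exact symmDiff_subset_unionSymmDiff (r := thetaO G) hcd hP

theorem thetaO_unionSymmDiff (c : LatticeCon A) : thetaO (unionSymmDiff c.r) = c.r := by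
  ext a b
  refine ⟨fun hab => ?_, symmDiff_subset_unionSymmDiff⟩
  by_contra hnab
  obtain ⟨Q, hQ⟩ := PrimeFilter.exists_mem_symmDiff_sigmaA_of_ne (mt c.mkHom_eq_mkHom.mp hnab)
  obtain ⟨x, y, hxy, hP⟩ :=
    mem_unionSymmDiff.mp (hab (show Q.comap c.mkHom ∈ sigmaA a ∆ sigmaA b from hQ))
  have hQ' : Q ∈ sigmaA (c.mkHom x) ∆ sigmaA (c.mkHom y) := hP
  rw [c.mkHom_eq_mkHom.mpr hxy, symmDiff_self] at hQ'
  exact hQ'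

def IsLMCongr.toLatticeCon {L : LMAlg I A} {r : A → A → Prop} (h : IsLMCongr L r) :
    LatticeCon A where
  r := r
  iseqv := ⟨h.refl, h.symm, h.trans⟩
  inf := h.inf_congr
  sup := h.sup_congr

namespace LMAlg

variable (L : LMAlg I A)

theorem sigmaA_phi (i : I) (a : A) : sigmaA (L.phi i a) = L.fA i ⁻¹' sigmaA a := rfl

theorem sigmaA_phibar (i : I) (a : A) : sigmaA (L.phibar i a) = (sigmaA (L.phi i a))ᶜ :=
  sigmaA_eq_compl_of_isCompl (.of_eq (L.inf_phibar i a) (L.sup_phibar i a))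

theorem isLMCongr_thetaO {G : Set (PrimeFilter A)} (hG : Semimodal L.fA Gᶜ) :
    IsLMCongr L (thetaO G) := by
  have hphi (i : I) {x y : A} (h : thetaO G x y) : thetaO G (L.phi i x) (L.phi i y) := by
    have hpre : L.fA i ⁻¹' G ⊆ G := fun P hP => by
      by_contra hPG
      exact hG i ⟨P, hPG, rfl⟩ hP
    rw [thetaO, sigmaA_phi, sigmaA_phi, ← Set.preimage_symmDiff]
    exact (Set.preimage_mono h).trans hpre
  let c := thetaOLatticeCon G
  exact
    { refl := c.refl
      symm := c.symm
      trans := c.trans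
      sup_congr := c.sup
      inf_congr := c.inf
      phi_congr := hphi
      phibar_congr i x y h := by
        rw [thetaO, sigmaA_phibar, sigmaA_phibar, compl_symmDiff_compl]
        exact hphi i h }

theorem semimodal_compl_unionSymmDiff {r : A → A → Prop}
    (hr : ∀ (i : I) {x y}, r x y → r (L.phi i x) (L.phi i y)) :
    Semimodal L.fA (unionSymmDiff r)ᶜ := by
  rintro i _ ⟨P, hP, rfl⟩ hfP
  obtain ⟨x, y, hxy, hfP⟩ := mem_unionSymmDiff.mp hfP
  exact hP (mem_unionSymmDiff.mpr ⟨L.phi i x, L.phi i y, hr i hxy, hfP⟩)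

end LMAlg

/-- `Θ_OS` is a lattice isomorphism from the lattice of open subsets of `X(A)`
with semimodal complement onto the lattice of LM_θ-congruences on `A`. -/
theorem stmt0 {I A : Type*} [LinearOrder I] [DistribLattice A] [BoundedOrder A]
    (L : LMAlg I A) :
    ∃ e : {G : Set (PrimeFilter A) // IsOpen G ∧ Semimodal L.fA Gᶜ} ≃o
          {r : A → A → Prop // IsLMCongr L r},
      ∀ G, (e G).val = fun a b => symmDiff (sigmaA a) (sigmaA b) ⊆ G.val := by
  let e : {G : Set (PrimeFilter A) // IsOpen G ∧ Semimodal L.fA Gᶜ} ≃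
      {r : A → A → Prop // IsLMCongr L r} :=
    { toFun G := ⟨thetaO G.1, L.isLMCongr_thetaO G.2.2⟩
      invFun r := ⟨unionSymmDiff r.1, isOpen_unionSymmDiff r.1,
        L.semimodal_compl_unionSymmDiff r.2.phi_congr⟩
      left_inv G := Subtype.ext (unionSymmDiff_thetaO G.2.1)
      right_inv r := Subtype.ext (thetaO_unionSymmDiff r.2.toLatticeCon) }
  exact ⟨e.toOrderIso (fun _ _ hGG' _ _ hab => hab.trans hGG')
    (fun _ _ hrs => unionSymmDiff_mono hrs), fun _ => rfl⟩
end

section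
/- Let n ≥ 2 be an integer and let (X,{f_1,…,f_{n−1}}) satisfy all axioms of an l_nP-space except possibly the density axiom (lP6). Then the following conditions are equivalent: (lP6) ⋃_{i=1}^{n−1} f_i(X) is dense in X; (l_nP6) X = ⋃_{i=1}^{n−1} f_i(X); (l_nP7) for all subsets Y,Z of X, if f_i^{-1}(Y) = f_i^{-1}(Z) for all 1 ≤ i ≤ n−1 then Y = Z; (l_nP8) for each x ∈ X there is i₀ with 1 ≤ i₀ ≤ n−1 such that x = f_{i₀}(x). -/
/-- The axioms of an `l_θP`-space except the density axiom (lP6):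
`X` is assumed to be a Priestley space (via `[CompactSpace X]` and
`[PriestleySpace X]`), each `f i` is continuous, `x ≤ y` implies `f i x = f i y`,
`i ≤ j` implies `f i x ≤ f j x`, and `f i ∘ f j = f i`. -/
structure IsLPSpaceAux {I X : Type*} [LinearOrder I] [PartialOrder X] [TopologicalSpace X]
    (f : I → X → X) : Prop where
  continuous : ∀ i, Continuous (f i)
  eq_of_le : ∀ (i : I) ⦃x y : X⦄, x ≤ y → f i x = f i y
  mono : ∀ ⦃i j : I⦄, i ≤ j → ∀ x, f i x ≤ f j x
  comp : ∀ i j x, f i (f j x) = f i x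

/-- An `l_θP`-space: the above axioms together with density of `⋃ i, f i (X)`. -/
structure IsLPSpace {I X : Type*} [LinearOrder I] [PartialOrder X] [TopologicalSpace X]
    (f : I → X → X) extends IsLPSpaceAux f : Prop where
  dense : Dense (⋃ i, Set.range (f i))

/-- for a structure satisfying all the l_nP-space axioms except possibly
density, the conditions (lP6), (l_nP6), (l_nP7), (l_nP8) are equivalent. -/
theorem stmt5 {X : Type*} [PartialOrder X] [TopologicalSpace X] [CompactSpace X]
    [PriestleySpace X] (n : ℕ) (hn : 2 ≤ n) (f : Fin (n - 1) → X → X)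
    (hf : IsLPSpaceAux f) :
    List.TFAE
      [ Dense (⋃ i, Set.range (f i)),
        (⋃ i, Set.range (f i)) = Set.univ,
        ∀ Y Z : Set X, (∀ i, f i ⁻¹' Y = f i ⁻¹' Z) → Y = Z,
        ∀ x : X, ∃ i, f i x = x ] := by
  tfae_have 1 → 2 := by
    intro h
    have hclosed : IsClosed (⋃ i, Set.range (f i)) := by
      apply isClosed_iUnion_of_finite
      intro i
      exact (isCompact_range (hf.continuous i)).isClosed
    rw [← hclosed.closure_eq]
    exact h.closure_eq
  tfae_have 2 → 4 := by
    intro h x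
    have hx : x ∈ (⋃ i, Set.range (f i)) := h ▸ Set.mem_univ x
    obtain ⟨_, ⟨i, rfl⟩, y, rfl⟩ := hx
    exact ⟨i, hf.comp i i y⟩
  tfae_have 4 → 3 := by
    intro h Y Z hYZ
    ext x
    obtain ⟨i, hi⟩ := h x
    constructor
    · intro hx
      have : x ∈ f i ⁻¹' Y := by simpa [Set.mem_preimage, hi] using hx
      rw [hYZ i] at this
      simpa [Set.mem_preimage, hi] using this
    · intro hx
      have : x ∈ f i ⁻¹' Z := by simpa [Set.mem_preimage, hi] using hx
      rw [← hYZ i] at this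
      simpa [Set.mem_preimage, hi] using this
  tfae_have 3 → 2 := by
    intro h
    apply h
    intro i
    ext x
    simp only [Set.mem_preimage, Set.mem_univ, iff_true, Set.mem_iUnion]
    exact ⟨i, f i x, (hf.comp i i x).symm ▸ rfl⟩
  tfae_have 2 → 1 := fun h => h ▸ dense_univ
  tfae_finish
end

section
/- Let n ≥ 2 be an integer and (X,{f_1,…,f_{n−1}}) an l_nP-space. Then X is the cardinal sum of a family of chains, each of which has at most n−1 elements; that is, X is partitioned into chains (each of size at most n−1) such that elements lying in distinct chains of the partition are incomparable. -/
/-- an l_nP-space is the cardinal sum of a family of chains, each with at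
most `n - 1` elements: `X` is partitioned into chains of size at most `n - 1` such that
elements in distinct chains are incomparable. -/
theorem stmt6 {X : Type*} [PartialOrder X] [TopologicalSpace X] [CompactSpace X]
    [PriestleySpace X] (n : ℕ) (hn : 2 ≤ n) (f : Fin (n - 1) → X → X)
    (hf : IsLPSpace f) :
    ∃ C : Set (Set X),
      (∀ c ∈ C, IsChain (· ≤ ·) c ∧ c.Finite ∧ c.ncard ≤ n - 1) ∧
      ⋃₀ C = Set.univ ∧
      C.PairwiseDisjoint id ∧
      (∀ c ∈ C, ∀ d ∈ C, c ≠ d → ∀ x ∈ c, ∀ y ∈ d, ¬ x ≤ y) := by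
  -- the union of the ranges is closed, hence all of `X`
  have hclosed : IsClosed (⋃ i, Set.range (f i)) := by
    apply isClosed_iUnion_of_finite
    intro i
    exact (isCompact_range (hf.continuous i)).isClosed
  have huniv : (⋃ i, Set.range (f i)) = Set.univ := by
    rw [← hclosed.closure_eq]
    exact hf.dense.closure_eq
  -- every point is a fixed point of some `f i`
  have hfix : ∀ x : X, ∃ i, f i x = x := by
    intro x
    have hx : x ∈ ⋃ i, Set.range (f i) := huniv ▸ Set.mem_univ x
    obtain ⟨_, ⟨i, rfl⟩, y, rfl⟩ := hx
    exact ⟨i, by rw [hf.comp]⟩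
  set K : X → Set X := fun x => Set.range (fun j => f j x) with hK
  have hmem : ∀ x, x ∈ K x := by
    intro x
    obtain ⟨i, hi⟩ := hfix x
    exact ⟨i, hi⟩
  have hKf : ∀ x j, K (f j x) = K x := by
    intro x j
    ext z
    simp only [hK, Set.mem_range, hf.comp]
  have hKle : ∀ ⦃x y : X⦄, x ≤ y → K x = K y := by
    intro x y hxy
    ext z
    simp only [hK, Set.mem_range, hf.eq_of_le _ hxy]
  have hKmem : ∀ ⦃x a : X⦄, x ∈ K a → K x = K a := by
    rintro x a ⟨j, rfl⟩
    exact hKf a j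
  refine ⟨Set.range K, ?_, ?_, ?_, ?_⟩
  · rintro c ⟨x, rfl⟩
    refine ⟨?_, Set.finite_range _, ?_⟩
    · rintro a ⟨j, rfl⟩ b ⟨k, rfl⟩ _
      rcases le_total j k with h | h
      · exact Or.inl (hf.mono h x)
      · exact Or.inr (hf.mono h x)
    · have : (K x).ncard = Nat.card (K x) := Nat.card_coe_set_eq _ |>.symm
      rw [this]
      calc Nat.card (K x) ≤ Nat.card (Fin (n - 1)) := Finite.card_range_le _
        _ = n - 1 := by simp
  · ext x
    simp only [Set.mem_sUnion, Set.mem_univ, iff_true]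
    exact ⟨K x, ⟨x, rfl⟩, hmem x⟩
  · rintro c ⟨x, rfl⟩ d ⟨y, rfl⟩ hcd
    refine Set.disjoint_left.2 fun z hzx hzy => hcd ?_
    simp only [id] at *
    rw [← hKmem hzx, ← hKmem hzy]
  · rintro c ⟨a, rfl⟩ d ⟨b, rfl⟩ hcd x hx y hy hxy
    exact hcd ((hKmem hx).symm.trans ((hKle hxy).trans (hKmem hy)))
end

section
/- Let n ≥ 2 be an integer and A an LM_n-algebra. Then the intersection of two principal LM_n-congruences on A is again a principal LM_n-congruence on A. -/
variable {I A : Type*} [LinearOrder I] [DistribLattice A] [BoundedOrder A]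

section Aux10

variable {I' A' : Type*} [LinearOrder I'] [DistribLattice A'] [BoundedOrder A']

/-- Uniqueness of complements in a bounded distributive lattice. -/
lemma aux_compl_unique {p c d : A'} (h1 : p ⊔ c = ⊤) (h2 : p ⊓ c = ⊥)
    (h3 : p ⊔ d = ⊤) (h4 : p ⊓ d = ⊥) : c = d := by
  have hc : c = c ⊓ d := by
    calc c = c ⊓ (p ⊔ d) := by rw [h3, inf_top_eq]
    _ = (c ⊓ p) ⊔ (c ⊓ d) := inf_sup_left c p d
    _ = c ⊓ d := by rw [inf_comm c p, h2, bot_sup_eq]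
  have hd : d = d ⊓ c := by
    calc d = d ⊓ (p ⊔ c) := by rw [h1, inf_top_eq]
    _ = (d ⊓ p) ⊔ (d ⊓ c) := inf_sup_left d p c
    _ = d ⊓ c := by rw [inf_comm d p, h4, bot_sup_eq]
  rw [hc, inf_comm c d, ← hd]

lemma aux_phi_phibar (L : LMAlg I' A') (j i : I') (x : A') :
    L.phi j (L.phibar i x) = L.phibar i x := by
  refine aux_compl_unique (p := L.phi i x) ?_ ?_ (L.sup_phibar i x) (L.inf_phibar i x)
  · have := congrArg (L.phi j) (L.sup_phibar i x)
    rwa [L.phi_sup, L.phi_phi, L.phi_top] at this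
  · have := congrArg (L.phi j) (L.inf_phibar i x)
    rwa [L.phi_inf, L.phi_phi, L.phi_bot] at this

/-- The congruence determined by the principal filter of `e`. -/
def auxThetaE (e : A') : A' → A' → Prop := fun x y => x ⊓ e = y ⊓ e

lemma auxThetaE_isLMCongr (L : LMAlg I' A') (e : A') (he : ∀ j, L.phi j e = e) :
    IsLMCongr L (auxThetaE e) := by
  refine ⟨fun _ => rfl, Eq.symm, Eq.trans, ?_, ?_, ?_, ?_⟩
  · intro x y u v h1 h2
    show (x ⊔ u) ⊓ e = (y ⊔ v) ⊓ e
    rw [inf_sup_right, inf_sup_right, h1, h2]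
  · intro x y u v h1 h2
    show (x ⊓ u) ⊓ e = (y ⊓ v) ⊓ e
    have key : ∀ p q : A', p ⊓ q ⊓ e = (p ⊓ e) ⊓ (q ⊓ e) := fun p q => by
      rw [inf_inf_inf_comm, inf_idem]
    rw [key, key, h1, h2]
  · intro i x y h
    show L.phi i x ⊓ e = L.phi i y ⊓ e
    rw [← he i, ← L.phi_inf, ← L.phi_inf]
    exact congrArg (L.phi i) h
  · intro i x y h
    show L.phibar i x ⊓ e = L.phibar i y ⊓ e
    replace h : L.phi i x ⊓ e = L.phi i y ⊓ e := by
      rw [← he i, ← L.phi_inf, ← L.phi_inf]; exact congrArg (L.phi i) h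
    have key : ∀ u v : A', L.phi i u ⊓ e = L.phi i v ⊓ e →
        L.phibar i u ⊓ e ≤ L.phibar i v ⊓ e := by
      intro u v huv
      have h0 : L.phibar i u ⊓ e = (L.phibar i u ⊓ e ⊓ L.phi i v) ⊔
          (L.phibar i u ⊓ e ⊓ L.phibar i v) := by
        rw [← inf_sup_left, L.sup_phibar, inf_top_eq]
      have h1 : L.phibar i u ⊓ e ⊓ L.phi i v = ⊥ := by
        calc L.phibar i u ⊓ e ⊓ L.phi i v = L.phibar i u ⊓ (L.phi i v ⊓ e) := by
              rw [inf_assoc, inf_comm e (L.phi i v)]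
        _ = L.phibar i u ⊓ (L.phi i u ⊓ e) := by rw [huv]
        _ = (L.phi i u ⊓ L.phibar i u) ⊓ e := by
              rw [← inf_assoc, inf_comm (L.phibar i u) (L.phi i u)]
        _ = ⊥ := by rw [L.inf_phibar, bot_inf_eq]
      rw [h0, h1, bot_sup_eq]
      exact le_inf inf_le_right (inf_le_left.trans inf_le_right)
    exact le_antisymm (key x y h) (key y x h.symm)

lemma aux_thetaE_le {L : LMAlg I' A'} {s : A' → A' → Prop} (hs : IsLMCongr L s)
    {e : A'} (he : s e ⊤) : ∀ x y : A', x ⊓ e = y ⊓ e → s x y := by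
  have hx : ∀ x : A', s x (x ⊓ e) := by
    intro x
    have := hs.inf_congr (hs.refl x) (hs.symm he)
    rwa [inf_top_eq] at this
  intro x y h
  exact hs.trans (h ▸ hx x) (hs.symm (hx y))

variable [Fintype I']

/-- The Boolean-center element associated to the pair `(a, b)`. -/
def auxE (L : LMAlg I' A') (a b : A') : A' :=
  (Finset.univ : Finset I').inf
    (fun i => (L.phi i a ⊓ L.phi i b) ⊔ (L.phibar i a ⊓ L.phibar i b))

lemma aux_phi_finsetInf (L : LMAlg I' A') (j : I') {ι : Type*} (S : Finset ι)
    (g : ι → A') : L.phi j (S.inf g) = S.inf (fun i => L.phi j (g i)) := by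
  induction S using Finset.cons_induction with
  | empty => simp [L.phi_top]
  | cons a S ha ih => rw [Finset.inf_cons, Finset.inf_cons, L.phi_inf, ih]

lemma aux_phi_auxE (L : LMAlg I' A') (a b : A') (j : I') :
    L.phi j (auxE L a b) = auxE L a b := by
  rw [auxE, aux_phi_finsetInf]
  congr 1
  funext i
  rw [L.phi_sup, L.phi_inf, L.phi_inf, L.phi_phi, L.phi_phi,
    aux_phi_phibar, aux_phi_phibar]

lemma aux_inf_le_of_le {p p' q q' e : A'} (hpp' : p ⊓ p' = ⊥)
    (hle : e ≤ (p ⊓ q) ⊔ (p' ⊓ q')) : p ⊓ e ≤ q := by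
  have : p ⊓ e ≤ p ⊓ ((p ⊓ q) ⊔ (p' ⊓ q')) := inf_le_inf_left p hle
  rw [inf_sup_left] at this
  have h2 : p ⊓ (p' ⊓ q') = ⊥ := by
    rw [← inf_assoc, hpp', bot_inf_eq]
  rw [h2, sup_bot_eq] at this
  exact this.trans (inf_le_right.trans inf_le_right)

lemma aux_inf_auxE (L : LMAlg I' A') (a b : A') :
    a ⊓ auxE L a b = b ⊓ auxE L a b := by
  apply L.determined
  intro i
  rw [L.phi_inf, L.phi_inf, aux_phi_auxE]
  set e := auxE L a b with he
  have hle : e ≤ (L.phi i a ⊓ L.phi i b) ⊔ (L.phibar i a ⊓ L.phibar i b) :=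
    Finset.inf_le (Finset.mem_univ i)
  have hle' : e ≤ (L.phi i b ⊓ L.phi i a) ⊔ (L.phibar i b ⊓ L.phibar i a) := by
    rwa [inf_comm (L.phi i b), inf_comm (L.phibar i b)]
  have h1 : L.phi i a ⊓ e ≤ L.phi i b := aux_inf_le_of_le (L.inf_phibar i a) hle
  have h2 : L.phi i b ⊓ e ≤ L.phi i a := aux_inf_le_of_le (L.inf_phibar i b) hle'
  exact le_antisymm (le_inf h1 inf_le_right) (le_inf h2 inf_le_right)

lemma aux_s_finsetInf_top {L : LMAlg I' A'} {s : A' → A' → Prop} (hs : IsLMCongr L s)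
    {ι : Type*} (S : Finset ι) (g : ι → A') (h : ∀ i ∈ S, s (g i) ⊤) :
    s (S.inf g) ⊤ := by
  induction S using Finset.cons_induction with
  | empty => exact (Finset.inf_empty (f := g)) ▸ hs.refl ⊤
  | cons a S ha ih =>
    rw [Finset.inf_cons]
    have := hs.inf_congr (h a (Finset.mem_cons_self a S))
      (ih (fun i hi => h i (Finset.mem_cons_of_mem hi)))
    rwa [inf_top_eq] at this

lemma aux_s_auxE_top {L : LMAlg I' A'} {s : A' → A' → Prop} (hs : IsLMCongr L s)
    {a b : A'} (hab : s a b) : s (auxE L a b) ⊤ := by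
  apply aux_s_finsetInf_top hs
  intro i _
  have h1 := hs.phi_congr i hab
  have h2 := hs.phibar_congr i hab
  have t1 : s (L.phi i a ⊓ L.phi i b) (L.phi i a) := by
    have := hs.inf_congr (hs.refl (L.phi i a)) (hs.symm h1)
    rwa [inf_idem] at this
  have t2 : s (L.phibar i a ⊓ L.phibar i b) (L.phibar i a) := by
    have := hs.inf_congr (hs.refl (L.phibar i a)) (hs.symm h2)
    rwa [inf_idem] at this
  have := hs.sup_congr t1 t2
  rwa [L.sup_phibar] at this

end Aux10

/-- the intersection of two principal LM_n-congruences on an LM_n-algebra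
is a principal LM_n-congruence. -/
theorem stmt10 {A : Type*} [DistribLattice A] [BoundedOrder A] (n : ℕ) (hn : 2 ≤ n)
    (L : LMAlg (Fin (n - 1)) A) (r s : A → A → Prop)
    (hr : IsPrincipalLMCongr L r) (hs : IsPrincipalLMCongr L s) :
    IsPrincipalLMCongr L (fun x y => r x y ∧ s x y) := by
  obtain ⟨a, b, hrC, hrab, hrMin⟩ := hr
  obtain ⟨c, d, hsC, hscd, hsMin⟩ := hs
  set e1 := auxE L a b with he1def
  set e2 := auxE L c d with he2def
  have he1 : ∀ j, L.phi j e1 = e1 := aux_phi_auxE L a b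
  have he2 : ∀ j, L.phi j e2 = e2 := aux_phi_auxE L c d
  -- r coincides with θ_{e1}
  have hr_iff : ∀ x y, r x y ↔ x ⊓ e1 = y ⊓ e1 := by
    intro x y
    constructor
    · intro h
      exact hrMin (auxThetaE e1) (auxThetaE_isLMCongr L e1 he1) (aux_inf_auxE L a b) x y h
    · intro h
      exact aux_thetaE_le hrC (aux_s_auxE_top hrC hrab) x y h
  have hs_iff : ∀ x y, s x y ↔ x ⊓ e2 = y ⊓ e2 := by
    intro x y
    constructor
    · intro h
      exact hsMin (auxThetaE e2) (auxThetaE_isLMCongr L e2 he2) (aux_inf_auxE L c d) x y h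
    · intro h
      exact aux_thetaE_le hsC (aux_s_auxE_top hsC hscd) x y h
  refine ⟨e1 ⊔ e2, ⊤, ?_, ?_, ?_⟩
  · exact ⟨fun x => ⟨hrC.refl x, hsC.refl x⟩,
      fun h => ⟨hrC.symm h.1, hsC.symm h.2⟩,
      fun h1 h2 => ⟨hrC.trans h1.1 h2.1, hsC.trans h1.2 h2.2⟩,
      fun h1 h2 => ⟨hrC.sup_congr h1.1 h2.1, hsC.sup_congr h1.2 h2.2⟩,
      fun h1 h2 => ⟨hrC.inf_congr h1.1 h2.1, hsC.inf_congr h1.2 h2.2⟩,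
      fun i _ _ h => ⟨hrC.phi_congr i h.1, hsC.phi_congr i h.2⟩,
      fun i _ _ h => ⟨hrC.phibar_congr i h.1, hsC.phibar_congr i h.2⟩⟩
  · constructor
    · rw [hr_iff, top_inf_eq]
      exact inf_eq_right.mpr le_sup_left
    · rw [hs_iff, top_inf_eq]
      exact inf_eq_right.mpr le_sup_right
  · intro t htC hte x y hxy
    have hx1 : x ⊓ e1 = y ⊓ e1 := (hr_iff x y).mp hxy.1
    have hx2 : x ⊓ e2 = y ⊓ e2 := (hs_iff x y).mp hxy.2
    have hxe : x ⊓ (e1 ⊔ e2) = y ⊓ (e1 ⊔ e2) := by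
      rw [inf_sup_left, inf_sup_left, hx1, hx2]
    exact aux_thetaE_le htC hte x y hxe
end

section
/- Let A be an LM_θ-algebra with dual space (X(A),{f_i^A}_{i∈I}) and Y ⊆ X(A). Then Y is a closed, open and modal subset of X(A) if and only if there is a Boolean element b ∈ C(A) such that Y = σ_A(b). -/
variable {I A : Type*} [LinearOrder I] [DistribLattice A] [BoundedOrder A]

/-! ### Auxiliary material for `stmt14` -/

namespace Stmt14Aux

open TopologicalSpace Set

variable {I A : Type*} [LinearOrder I] [DistribLattice A] [BoundedOrder A]

lemma mem_sigmaA {a : A} {P : PrimeFilter A} : P ∈ sigmaA a ↔ a ∈ P.carrier := Iff.rfl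

lemma isOpen_sigmaA (a : A) : IsOpen (sigmaA (A := A) a) :=
  TopologicalSpace.isOpen_generateFrom_of_mem (Or.inl ⟨a, rfl⟩)

lemma isOpen_compl_sigmaA (a : A) : IsOpen (sigmaA (A := A) a)ᶜ :=
  TopologicalSpace.isOpen_generateFrom_of_mem (Or.inr ⟨a, rfl⟩)

lemma compl_sigmaA {b c : A} (h : IsCompl b c) : (sigmaA (A := A) b)ᶜ = sigmaA c := by
  ext P
  simp only [Set.mem_compl_iff, mem_sigmaA]
  constructor
  · intro hb
    have htop : b ⊔ c ∈ P.carrier := by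
      rw [h.sup_eq_top]; exact P.top_mem
    rcases P.prime htop with h' | h'
    · exact absurd h' hb
    · exact h'
  · intro hc hb
    have := P.inf_mem hb hc
    rw [h.inf_eq_bot] at this
    exact P.bot_notMem this

lemma phi_eq_phi (L : LMAlg I A) {b c : A} (h : IsCompl b c) (i j : I) :
    L.phi i b = L.phi j b := by
  have key : ∀ {i j : I}, i ≤ j → L.phi j b ≤ L.phi i b := by
    intro i j hij
    have h1 : L.phi j b ⊓ L.phi i c ≤ ⊥ := by
      calc L.phi j b ⊓ L.phi i c ≤ L.phi j b ⊓ L.phi j c :=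
            inf_le_inf_left _ (L.phi_mono hij c)
        _ = L.phi j (b ⊓ c) := (L.phi_inf j b c).symm
        _ = ⊥ := by rw [h.inf_eq_bot, L.phi_bot]
    have h2 : L.phi j b ≤ L.phi i b ⊔ L.phi i c := by
      rw [← L.phi_sup, h.sup_eq_top, L.phi_top]
      exact le_top
    calc L.phi j b = L.phi j b ⊓ (L.phi i b ⊔ L.phi i c) := (inf_eq_left.mpr h2).symm
      _ = (L.phi j b ⊓ L.phi i b) ⊔ (L.phi j b ⊓ L.phi i c) := inf_sup_left _ _ _
      _ ≤ L.phi i b ⊔ ⊥ := sup_le_sup inf_le_right h1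
      _ = L.phi i b := sup_bot_eq _
  rcases le_total i j with hij | hij
  · exact le_antisymm (L.phi_mono hij b) (key hij)
  · exact le_antisymm (key hij) (L.phi_mono hij b)

lemma phi_eq_self (L : LMAlg I A) {b c : A} (h : IsCompl b c) (i : I) :
    L.phi i b = b := by
  apply L.determined
  intro j
  rw [L.phi_phi, phi_eq_phi L h i j]

lemma fA_carrier (L : LMAlg I A) (i : I) (P : PrimeFilter A) :
    (L.fA i P).carrier = L.phi i ⁻¹' P.carrier := rfl

lemma fA_eq_of_subset (L : LMAlg I A) {P Q : PrimeFilter A}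
    (h : P.carrier ⊆ Q.carrier) (i : I) : L.fA i P = L.fA i Q := by
  have hcar : (L.fA i P).carrier = (L.fA i Q).carrier := by
    ext a
    simp only [fA_carrier, Set.mem_preimage]
    constructor
    · exact fun ha => h ha
    · intro ha
      by_contra hna
      have hbar : L.phibar i a ∈ P.carrier := by
        have htop : L.phi i a ⊔ L.phibar i a ∈ P.carrier := by
          rw [L.sup_phibar]; exact P.top_mem
        rcases P.prime htop with h' | h'
        · exact absurd h' hna
        · exact h'
      have := Q.inf_mem ha (h hbar)
      rw [L.inf_phibar] at this
      exact Q.bot_notMem this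
  cases' hP : L.fA i P with c1 t1 b1 m1 i1 p1
  cases' hQ : L.fA i Q with c2 t2 b2 m2 i2 p2
  rw [hP, hQ] at hcar
  simp only at hcar
  subst hcar
  rfl

/-! ### Compactness of the dual space -/

noncomputable def eMap : PrimeFilter A → (A → Bool) :=
  fun P a => @decide (a ∈ P.carrier) (Classical.propDecidable _)

lemma eMap_eq_true {P : PrimeFilter A} {a : A} : eMap P a = true ↔ a ∈ P.carrier :=
  @decide_eq_true_iff _ (Classical.propDecidable _)

lemma eMap_eq_false {P : PrimeFilter A} {a : A} : eMap P a = false ↔ a ∉ P.carrier :=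
  @decide_eq_false_iff_not _ (Classical.propDecidable _)

lemma sigmaA_eq_preimage (a : A) :
    sigmaA (A := A) a = eMap ⁻¹' {f | f a = true} := by
  ext P
  simp only [mem_sigmaA, Set.mem_preimage, Set.mem_setOf_eq, eMap_eq_true]

lemma compl_sigmaA_eq_preimage (a : A) :
    (sigmaA (A := A) a)ᶜ = eMap ⁻¹' {f | f a = false} := by
  ext P
  simp only [Set.mem_compl_iff, mem_sigmaA, Set.mem_preimage, Set.mem_setOf_eq, eMap_eq_false]

lemma level_eq_preimage (a : A) (x : Bool) :
    {f : A → Bool | f a = x} = (fun f : A → Bool => f a) ⁻¹' {x} := rfl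

lemma isClosed_level (a : A) (x : Bool) : IsClosed {f : A → Bool | f a = x} := by
  rw [level_eq_preimage]
  exact (isClosed_discrete ({x} : Set Bool)).preimage (continuous_apply a)

lemma isOpen_level (a : A) (x : Bool) : IsOpen {f : A → Bool | f a = x} := by
  rw [level_eq_preimage]
  exact (continuous_apply a).isOpen_preimage _ (isOpen_discrete _)

lemma continuous_eMap : Continuous (eMap (A := A)) := by
  apply continuous_pi
  intro a
  rw [continuous_discrete_rng]
  intro b
  cases b
  · have hpre : (fun P : PrimeFilter A => eMap P a) ⁻¹' {false} = (sigmaA a)ᶜ := by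
      ext P
      simp only [Set.mem_preimage, Set.mem_singleton_iff, Set.mem_compl_iff, mem_sigmaA,
        eMap_eq_false]
    rw [hpre]
    exact isOpen_compl_sigmaA a
  · have hpre : (fun P : PrimeFilter A => eMap P a) ⁻¹' {true} = sigmaA a := by
      ext P
      simp only [Set.mem_preimage, Set.mem_singleton_iff, mem_sigmaA, eMap_eq_true]
    rw [hpre]
    exact isOpen_sigmaA a

lemma isInducing_eMap : Topology.IsInducing (eMap (A := A)) := by
  constructor
  refine le_antisymm (continuous_iff_le_induced.mp continuous_eMap) ?_
  show TopologicalSpace.induced (eMap (A := A)) Pi.topologicalSpace ≤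
    TopologicalSpace.generateFrom _
  apply le_generateFrom
  rintro s (⟨a, rfl⟩ | ⟨a, rfl⟩)
  · rw [sigmaA_eq_preimage a]
    exact isOpen_induced (isOpen_level a true)
  · show @IsOpen _ (TopologicalSpace.induced (eMap (A := A)) Pi.topologicalSpace) (sigmaA a)ᶜ
    rw [compl_sigmaA_eq_preimage a]
    exact isOpen_induced (isOpen_level a false)

lemma injective_eMap : Function.Injective (eMap (A := A)) := by
  intro P Q h
  have hcar : P.carrier = Q.carrier := by
    ext a
    rw [← eMap_eq_true (P := P), ← eMap_eq_true (P := Q), h]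
  cases' P with c1 t1 b1 m1 i1 p1
  cases' Q with c2 t2 b2 m2 i2 p2
  simp only at hcar
  subst hcar
  rfl

def goodSet (A : Type*) [DistribLattice A] [BoundedOrder A] : Set (A → Bool) :=
  {f | f ⊤ = true} ∩ {f | f ⊥ = false} ∩
    (⋂ (a : A) (b : A) (_ : a ≤ b), ({f | f a = false} ∪ {f | f b = true})) ∩
    (⋂ (a : A) (b : A), ({f | f a = false} ∪ {f | f b = false} ∪ {f | f (a ⊓ b) = true})) ∩
    (⋂ (a : A) (b : A), ({f | f (a ⊔ b) = false} ∪ {f | f a = true} ∪ {f | f b = true}))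

lemma isClosed_goodSet : IsClosed (goodSet A) := by
  refine ((((isClosed_level ⊤ true).inter (isClosed_level ⊥ false)).inter ?_).inter ?_).inter ?_
  · exact isClosed_iInter fun a => isClosed_iInter fun b => isClosed_iInter fun _ =>
      (isClosed_level a false).union (isClosed_level b true)
  · exact isClosed_iInter fun a => isClosed_iInter fun b =>
      ((isClosed_level a false).union (isClosed_level b false)).union
        (isClosed_level (a ⊓ b) true)
  · exact isClosed_iInter fun a => isClosed_iInter fun b =>
      ((isClosed_level (a ⊔ b) false).union (isClosed_level a true)).union
        (isClosed_level b true)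

lemma range_eMap : Set.range (eMap (A := A)) = goodSet A := by
  ext f
  constructor
  · rintro ⟨P, rfl⟩
    refine ⟨⟨⟨⟨eMap_eq_true.mpr P.top_mem, eMap_eq_false.mpr P.bot_notMem⟩, ?_⟩, ?_⟩, ?_⟩
    · refine Set.mem_iInter.mpr fun a => Set.mem_iInter.mpr fun b => Set.mem_iInter.mpr fun hab => ?_
      by_cases ha : a ∈ P.carrier
      · exact Or.inr (eMap_eq_true.mpr (P.mem_of_le ha hab))
      · exact Or.inl (eMap_eq_false.mpr ha)
    · refine Set.mem_iInter.mpr fun a => Set.mem_iInter.mpr fun b => ?_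
      by_cases ha : a ∈ P.carrier
      · by_cases hb : b ∈ P.carrier
        · exact Or.inr (eMap_eq_true.mpr (P.inf_mem ha hb))
        · exact Or.inl (Or.inr (eMap_eq_false.mpr hb))
      · exact Or.inl (Or.inl (eMap_eq_false.mpr ha))
    · refine Set.mem_iInter.mpr fun a => Set.mem_iInter.mpr fun b => ?_
      by_cases hab : a ⊔ b ∈ P.carrier
      · rcases P.prime hab with h | h
        · exact Or.inl (Or.inr (eMap_eq_true.mpr h))
        · exact Or.inr (eMap_eq_true.mpr h)
      · exact Or.inl (Or.inl (eMap_eq_false.mpr hab))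
  · rintro ⟨⟨⟨⟨htop, hbot⟩, hle⟩, hinf⟩, hsup⟩
    have hle' : ∀ {a b : A}, a ≤ b → f a = true → f b = true := by
      intro a b hab ha
      have := Set.mem_iInter.mp (Set.mem_iInter.mp (Set.mem_iInter.mp hle a) b) hab
      rcases this with h | h
      · rw [Set.mem_setOf_eq, ha] at h; exact absurd h (by simp)
      · exact h
    have hinf' : ∀ {a b : A}, f a = true → f b = true → f (a ⊓ b) = true := by
      intro a b ha hb
      have := Set.mem_iInter.mp (Set.mem_iInter.mp hinf a) b
      rcases this with (h | h) | h
      · rw [Set.mem_setOf_eq, ha] at h; exact absurd h (by simp)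
      · rw [Set.mem_setOf_eq, hb] at h; exact absurd h (by simp)
      · exact h
    have hsup' : ∀ {a b : A}, f (a ⊔ b) = true → f a = true ∨ f b = true := by
      intro a b hab
      have := Set.mem_iInter.mp (Set.mem_iInter.mp hsup a) b
      rcases this with (h | h) | h
      · rw [Set.mem_setOf_eq, hab] at h; exact absurd h (by simp)
      · exact Or.inl h
      · exact Or.inr h
    refine ⟨{ carrier := {a | f a = true}
              top_mem := htop
              bot_notMem := by
                intro h
                rw [Set.mem_setOf_eq, hbot] at h
                exact absurd h (by simp)
              mem_of_le := fun ha hab => hle' hab ha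
              inf_mem := fun ha hb => hinf' ha hb
              prime := fun hab => hsup' hab }, ?_⟩
    funext a
    cases h : f a
    · exact eMap_eq_false.mpr (by simp [Set.mem_setOf_eq, h])
    · exact eMap_eq_true.mpr h

lemma isClosedEmbedding_eMap : Topology.IsClosedEmbedding (eMap (A := A)) :=
  ⟨⟨isInducing_eMap, injective_eMap⟩, by rw [range_eMap]; exact isClosed_goodSet⟩

instance : CompactSpace (PrimeFilter A) :=
  isClosedEmbedding_eMap.compactSpace

/-! ### Clopen up-sets -/

lemma finset_inf_mem {β : Type*} {P : PrimeFilter A} {s : Finset β} {g : β → A}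
    (h : ∀ x ∈ s, g x ∈ P.carrier) : s.inf g ∈ P.carrier := by
  classical
  induction s using Finset.cons_induction with
  | empty => simpa using P.top_mem
  | cons x s hx ih =>
      rw [Finset.inf_cons]
      exact P.inf_mem (h x (Finset.mem_cons_self x s))
        (ih fun y hy => h y (Finset.mem_cons_of_mem hy))

lemma exists_of_finset_sup_mem {β : Type*} {P : PrimeFilter A} {s : Finset β} {g : β → A}
    (h : s.sup g ∈ P.carrier) : ∃ x ∈ s, g x ∈ P.carrier := by
  classical
  induction s using Finset.cons_induction with
  | empty => simp only [Finset.sup_empty] at h; exact absurd h P.bot_notMem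
  | cons x s hx ih =>
      rw [Finset.sup_cons] at h
      rcases P.prime h with h' | h'
      · exact ⟨x, Finset.mem_cons_self x s, h'⟩
      · obtain ⟨y, hy, hgy⟩ := ih h'
        exact ⟨y, Finset.mem_cons_of_mem hy, hgy⟩

lemma eq_sigmaA_of_clopen_upset {Y : Set (PrimeFilter A)} (hC : IsClosed Y) (hO : IsOpen Y)
    (hup : ∀ {P Q : PrimeFilter A}, P ∈ Y → P.carrier ⊆ Q.carrier → Q ∈ Y) :
    ∃ b : A, Y = sigmaA b := by
  classical
  -- step 1: for each `P ∈ Y`, a clopen `σ a` with `P ∈ σ a ⊆ Y`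
  have step1 : ∀ P : PrimeFilter A, P ∈ Y → ∃ a : A, P ∈ sigmaA a ∧ sigmaA a ⊆ Y := by
    intro P hP
    have hsep : ∀ Q : {Q : PrimeFilter A // Q ∈ Yᶜ}, ∃ a : A,
        a ∈ P.carrier ∧ a ∉ (Q : PrimeFilter A).carrier := by
      rintro ⟨Q, hQ⟩
      have hns : ¬ P.carrier ⊆ Q.carrier := fun hss => hQ (hup hP hss)
      obtain ⟨a, ha, hna⟩ := Set.not_subset.mp hns
      exact ⟨a, ha, hna⟩
    choose g hg1 hg2 using hsep
    have hcover : Yᶜ ⊆ ⋃ Q : {Q : PrimeFilter A // Q ∈ Yᶜ}, (sigmaA (g Q))ᶜ := by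
      intro Q hQ
      exact Set.mem_iUnion.mpr ⟨⟨Q, hQ⟩, hg2 ⟨Q, hQ⟩⟩
    have hcompact : IsCompact Yᶜ := (hO.isClosed_compl).isCompact
    obtain ⟨t, ht⟩ := hcompact.elim_finite_subcover _
      (fun Q => isOpen_compl_sigmaA (g Q)) hcover
    refine ⟨t.inf g, finset_inf_mem fun Q _ => hg1 Q, ?_⟩
    intro R hR
    by_contra hRY
    obtain ⟨Q, hQt, hQR⟩ := Set.mem_iUnion₂.mp (ht hRY)
    exact hQR (R.mem_of_le hR (Finset.inf_le hQt))
  choose! k hk1 hk2 using step1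
  have hcover : Y ⊆ ⋃ P : {P : PrimeFilter A // P ∈ Y}, sigmaA (k P) := by
    intro P hP
    exact Set.mem_iUnion.mpr ⟨⟨P, hP⟩, hk1 P hP⟩
  obtain ⟨s, hs⟩ := (hC.isCompact).elim_finite_subcover _
    (fun P : {P : PrimeFilter A // P ∈ Y} => isOpen_sigmaA (k (P : PrimeFilter A))) hcover
  refine ⟨s.sup (fun P => k (P : PrimeFilter A)), ?_⟩
  ext R
  constructor
  · intro hR
    obtain ⟨P, hPs, hPR⟩ := Set.mem_iUnion₂.mp (hs hR)
    exact R.mem_of_le hPR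
      (Finset.le_sup (f := fun P : {P : PrimeFilter A // P ∈ Y} => k (P : PrimeFilter A)) hPs)
  · intro hR
    obtain ⟨P, _, hPR⟩ := exists_of_finset_sup_mem hR
    exact hk2 (P : PrimeFilter A) P.2 hPR

/-! ### Prime filter separation -/

lemma exists_primeFilter {x y : A} (h : ¬ x ≤ y) :
    ∃ P : PrimeFilter A, x ∈ P.carrier ∧ y ∉ P.carrier := by
  have hdis : Disjoint ((Order.PFilter.principal x : Order.PFilter A) : Set A)
      ((Order.Ideal.principal y : Order.Ideal A) : Set A) := by
    rw [Set.disjoint_left]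
    intro z hz hz'
    exact h (le_trans (Order.PFilter.mem_principal.mp hz)
      (Order.Ideal.mem_principal.mp hz'))
  obtain ⟨J, hJp, hIJ, hdisJ⟩ := DistribLattice.prime_ideal_of_disjoint_filter_ideal hdis
  have hxJ : x ∉ (J : Set A) :=
    Set.disjoint_left.mp hdisJ (Order.PFilter.mem_principal.mpr le_rfl)
  refine ⟨{ carrier := (J : Set A)ᶜ
            top_mem := fun htop => hxJ (J.lower le_top htop)
            bot_notMem := fun hbot => hbot J.bot_mem
            mem_of_le := fun ha hab hb => ha (J.lower hab hb)
            inf_mem := fun ha hb hab => (hJp.mem_or_mem hab).elim ha hb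
            prime := fun {a b} hab => by
              by_contra hcon
              push_neg at hcon
              simp only [Set.mem_compl_iff, not_not] at hcon
              exact hab (Order.Ideal.sup_mem hcon.1 hcon.2) }, hxJ,
    fun hy => hy (hIJ (Order.Ideal.mem_principal_self))⟩

end Stmt14Aux

open Stmt14Aux in

/-- `Y ⊆ X(A)` is closed, open and modal iff `Y = σ_A b` for some Boolean
(complemented) element `b` of `A`. -/
theorem stmt14 {I A : Type*} [LinearOrder I] [DistribLattice A] [BoundedOrder A]
    (L : LMAlg I A) (Y : Set (PrimeFilter A)) :
    (IsClosed Y ∧ IsOpen Y ∧ Modal L.fA Y) ↔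
      ∃ b : A, (∃ c : A, IsCompl b c) ∧ Y = sigmaA b := by
  constructor
  · rintro ⟨hC, hO, hM⟩
    rcases isEmpty_or_nonempty I with hI | hI
    · -- degenerate case: `A` is a subsingleton, so there are no prime filters
      have hsub : (⊥ : A) = ⊤ := L.determined ⊥ ⊤ (fun i => isEmptyElim i)
      have hempty : IsEmpty (PrimeFilter A) := by
        refine ⟨fun P => P.bot_notMem ?_⟩
        rw [hsub]; exact P.top_mem
      refine ⟨⊥, ⟨⊤, isCompl_bot_top⟩, ?_⟩
      ext P
      exact isEmptyElim P
    · obtain ⟨i0⟩ := hI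
      have hup : ∀ {Z : Set (PrimeFilter A)}, Modal L.fA Z →
          ∀ {P Q : PrimeFilter A}, P ∈ Z → P.carrier ⊆ Q.carrier → Q ∈ Z := by
        intro Z hZ P Q hP hPQ
        have h1 : L.fA i0 P ∈ Z := by rw [← hZ i0] at hP; exact hP
        rw [Stmt14Aux.fA_eq_of_subset L hPQ i0] at h1
        rw [← hZ i0]
        exact h1
      have hMc : Modal L.fA Yᶜ := by
        intro i
        rw [Set.preimage_compl, hM i]
      obtain ⟨b, hb⟩ := Stmt14Aux.eq_sigmaA_of_clopen_upset hC hO (fun hP hPQ => hup hM hP hPQ)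
      obtain ⟨c, hc⟩ := Stmt14Aux.eq_sigmaA_of_clopen_upset hO.isClosed_compl hC.isOpen_compl
        (fun hP hPQ => hup hMc hP hPQ)
      have hinf : b ⊓ c = ⊥ := by
        by_contra hne
        have hnle : ¬ b ⊓ c ≤ ⊥ := fun hle => hne (le_bot_iff.mp hle)
        obtain ⟨P, hP, -⟩ := Stmt14Aux.exists_primeFilter hnle
        have hPb : P ∈ sigmaA b := P.mem_of_le hP inf_le_left
        have hPc : P ∈ sigmaA c := P.mem_of_le hP inf_le_right
        rw [← hb] at hPb
        rw [← hc] at hPc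
        exact hPc hPb
      have hsup : b ⊔ c = ⊤ := by
        by_contra hne
        have hnle : ¬ (⊤ : A) ≤ b ⊔ c := fun hle => hne (top_le_iff.mp hle)
        obtain ⟨P, -, hP2⟩ := Stmt14Aux.exists_primeFilter hnle
        have : P ∈ Y ∪ Yᶜ := by
          rcases Classical.em (P ∈ Y) with h | h
          · exact Or.inl h
          · exact Or.inr h
        rcases this with h | h
        · rw [hb] at h
          exact hP2 (P.mem_of_le h le_sup_left)
        · rw [hc] at h
          exact hP2 (P.mem_of_le h le_sup_right)
      exact ⟨b, ⟨c, IsCompl.of_eq hinf hsup⟩, hb⟩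
  · rintro ⟨b, ⟨c, hcompl⟩, rfl⟩
    refine ⟨?_, Stmt14Aux.isOpen_sigmaA b, ?_⟩
    · rw [← isOpen_compl_iff, Stmt14Aux.compl_sigmaA hcompl]
      exact Stmt14Aux.isOpen_sigmaA c
    · intro i
      ext P
      show b ∈ (L.fA i P).carrier ↔ b ∈ P.carrier
      rw [Stmt14Aux.fA_carrier, Set.mem_preimage, Stmt14Aux.phi_eq_self L hcompl i]
end
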